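/- For any two density matrices ρ₁, ρ₂, the fidelity is bounded above by the super-fidelity: (tr√(√ρ₁ ρ₂ √ρ₁))² ≤ tr(ρ₁ρ₂) + √((1 - tr ρ₁²)(1 - tr ρ₂²)). -/

import Mathlib

open Matrix ComplexOrder

attribute [local instance] Classical.propDecidable

/-- The PSD square root `Matrix.PosSemidef.sqrt`, as defined in the older Mathlib (removed since). -/
noncomputable def Matrix.PosSemidef.sqrt {n : Type*} [Fintype n] [DecidableEq n] {𝕜 : Type*} [RCLike 𝕜]
    {A : Matrix n n 𝕜} (hA : A.PosSemidef) : Matrix n n 𝕜 :=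
  (hA.1.eigenvectorUnitary : Matrix n n 𝕜) * diagonal (((↑) : ℝ → 𝕜) ∘ (√·) ∘ hA.1.eigenvalues) *
    (star hA.1.eigenvectorUnitary : Matrix n n 𝕜)

/-- Fidelity `F(ρ₁,ρ₂) = (tr √(√ρ₁ ρ₂ √ρ₁))²` (0 when not defined). -/
noncomputable def fid {n : Type*} [Fintype n] [DecidableEq n] (ρ₁ ρ₂ : Matrix n n ℂ) : ℝ :=
  if h1 : ρ₁.PosSemidef then
    if h2 : (h1.sqrt * ρ₂ * h1.sqrt).PosSemidef then (h2.sqrt.trace).re ^ 2 else 0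
  else 0

/-!
Let `S = √(√ρ₁ ρ₂ √ρ₁)` and let `Λ²` be the exterior square. Since `2 tr Λ²A = (tr A)² - tr A²`,
`(tr S)² = tr S² + 2 tr Λ²S = tr ρ₁ρ₂ + 2 tr Λ²S`. The functor `Λ²` is multiplicative and commutes
with square roots, so `Λ²S = √(√(Λ²ρ₁) Λ²ρ₂ √(Λ²ρ₁))`. For positive `P, Q` the polar decomposition
`√Q √P = W √(√P Q √P)` and Cauchy–Schwarz for the Hilbert–Schmidt inner product give
`tr √(√P Q √P) ≤ √(tr P tr Q)`; with `P = Λ²ρ₁`, `Q = Λ²ρ₂` this bounds `2 tr Λ²S` by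
`√((1 - tr ρ₁²)(1 - tr ρ₂²))`.
-/

open scoped MatrixOrder
open RCLike

namespace Matrix

variable {n : Type*}

section Field

variable [Fintype n] {K : Type*} [Field K]

/-- `Λ²A`, i.e. `A ⊗ A` composed with the projection onto antisymmetric tensors, indexed by all of
`n × n` rather than by pairs `i < j`. -/
def exteriorSquare (A : Matrix n n K) : Matrix (n × n) (n × n) K :=
  of fun p q ↦ (A p.1 q.1 * A p.2 q.2 - A p.1 q.2 * A p.2 q.1) / 2

lemma exteriorSquare_mul [NeZero (2 : K)] (A B : Matrix n n K) :
    exteriorSquare (A * B) = exteriorSquare A * exteriorSquare B := by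
  ext ⟨i, j⟩ ⟨a, b⟩
  set h : n → n → K := fun k l ↦
    (A i k * B k a * (A j l * B l b) - A i k * B k b * (A j l * B l a)) / 2
  -- the summand is the average of `h` and its transpose, which have the same double sum
  have hsplit (k l : n) :
      exteriorSquare A (i, j) (k, l) * exteriorSquare B (k, l) (a, b) = (h k l + h l k) / 2 := by
    simp only [exteriorSquare, of_apply, h]
    ring
  rw [mul_apply, Fintype.sum_prod_type]
  simp only [hsplit, ← Finset.sum_div, Finset.sum_add_distrib]
  rw [Finset.sum_comm (f := fun k l ↦ h l k), add_self_div_two]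
  simp only [h, exteriorSquare, of_apply, mul_apply, Finset.sum_mul_sum, ← Finset.sum_sub_distrib,
    Finset.sum_div]

lemma trace_exteriorSquare (A : Matrix n n K) :
    (exteriorSquare A).trace = (A.trace ^ 2 - (A * A).trace) / 2 := by
  simp only [trace, diag, exteriorSquare, of_apply, Fintype.sum_prod_type, sq, Finset.sum_mul_sum,
    mul_apply, ← Finset.sum_sub_distrib, Finset.sum_div]

end Field

section RCLike

variable {𝕜 : Type*} [RCLike 𝕜]

lemma exteriorSquare_star (A : Matrix n n 𝕜) :
    exteriorSquare (star A) = star (exteriorSquare A) := by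
  ext p q
  simp only [exteriorSquare, of_apply, star_apply, star_div₀, star_sub, star_mul', star_ofNat]
  ring

variable [Fintype n]

lemma re_trace_mono {A B : Matrix n n 𝕜} (hAB : A ≤ B) : re A.trace ≤ re B.trace := by
  have := (nonneg_iff.mp (le_iff.mp hAB).trace_nonneg).1
  rwa [trace_sub, map_sub, sub_nonneg] at this

lemma re_trace_exteriorSquare {A : Matrix n n 𝕜} (hA : 0 ≤ A) :
    re (exteriorSquare A).trace = (re A.trace ^ 2 - re (A * A).trace) / 2 := by
  have him : im A.trace = 0 := (nonneg_iff.mp (nonneg_iff_posSemidef.mp hA).trace_nonneg).2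
  rw [trace_exteriorSquare, ← ofReal_ofNat, div_re_ofReal]
  simp [sq, him]

variable [DecidableEq n]

lemma re_trace_mul_star_le (A B : Matrix n n 𝕜) :
    re (B * star A).trace ≤ √(re (A * star A).trace) * √(re (B * star B).trace) := by
  let _ := toMatrixSeminormedAddCommGroup (1 : Matrix n n 𝕜) PosSemidef.one
  let _ := toMatrixInnerProductSpace (1 : Matrix n n 𝕜) PosSemidef.one
  have hinner (A B : Matrix n n 𝕜) : (inner 𝕜 A B : 𝕜) = (B * star A).trace := by
    show (B * 1 * Aᴴ).trace = _
    rw [mul_one, star_eq_conjTranspose]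
  have hnorm (A : Matrix n n 𝕜) : ‖A‖ = √(re (A * star A).trace) := by
    rw [norm_eq_sqrt_re_inner (𝕜 := 𝕜), hinner]
  rw [← hinner, ← hnorm, ← hnorm]
  exact re_inner_le_norm A B

lemma PosSemidef.sqrt_eq_cfcSqrt {A : Matrix n n 𝕜} (hA : A.PosSemidef) :
    hA.sqrt = CFC.sqrt A := by
  rw [CFC.sqrt_eq_cfc, cfc_nnreal_eq_real _ A, hA.1.cfc_eq]
  simp only [IsHermitian.cfc, PosSemidef.sqrt]
  congr 3
  funext i
  simp [Real.coe_sqrt, Real.coe_toNNReal', max_eq_left (hA.eigenvalues_nonneg i)]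

lemma exteriorSquare_nonneg {A : Matrix n n 𝕜} (hA : 0 ≤ A) : 0 ≤ exteriorSquare A := by
  have hA' : A = star (CFC.sqrt A) * CFC.sqrt A := by
    rw [(CFC.sqrt_nonneg A).isSelfAdjoint.star_eq, CFC.sqrt_mul_sqrt_self A hA]
  rw [hA', exteriorSquare_mul, exteriorSquare_star]
  exact star_mul_self_nonneg (exteriorSquare (CFC.sqrt A))

lemma sqrt_exteriorSquare {A : Matrix n n 𝕜} (hA : 0 ≤ A) :
    CFC.sqrt (exteriorSquare A) = exteriorSquare (CFC.sqrt A) :=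
  CFC.sqrt_unique (by rw [← exteriorSquare_mul, CFC.sqrt_mul_sqrt_self A hA])
    (exteriorSquare_nonneg (CFC.sqrt_nonneg A))

lemma exists_isStarProjection_mul_star_and_star_mul_eq_sqrt (X : Matrix n n 𝕜) :
    ∃ W : Matrix n n 𝕜, IsStarProjection (W * star W) ∧ star W * X = CFC.sqrt (star X * X) := by
  set T := CFC.sqrt (star X * X)
  have hT : IsSelfAdjoint T := (CFC.sqrt_nonneg _).isSelfAdjoint
  -- every function is continuous on the finite spectrum of a matrix
  have hmul (f g : ℝ → ℝ) : cfc f T * cfc g T = cfc (fun x ↦ f x * g x) T :=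
    (cfc_mul f g T (T.finite_real_spectrum.continuousOn f)
      (T.finite_real_spectrum.continuousOn g)).symm
  have hTT : star X * X = cfc (fun x : ℝ ↦ x * x) T := by
    rw [← hmul, cfc_id' ℝ T hT, CFC.sqrt_mul_sqrt_self _ (star_mul_self_nonneg X)]
  -- `X * T'`, with `T'` the pseudo-inverse of `T`, is the partial isometry in the polar
  -- decomposition of `X`.
  set T' := cfc (·⁻¹ : ℝ → ℝ) T
  have hT' : star T' = T' := (cfc_predicate _ T : IsSelfAdjoint T').star_eq
  refine ⟨X * T', ⟨?_, .mul_star_self _⟩, ?_⟩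
  · have hT'T' : T' * T' * (star X * X) * T' * T' = T' * T' := by
      rw [hTT, hmul, hmul, hmul, hmul]
      refine cfc_congr fun x _ ↦ ?_
      rcases eq_or_ne x 0 with rfl | hx
      · simp
      · field_simp
    rw [IsIdempotentElem, star_mul, hT']
    calc X * T' * (T' * star X) * (X * T' * (T' * star X))
        = X * (T' * T' * (star X * X) * T' * T') * star X := by noncomm_ring
      _ = X * T' * (T' * star X) := by rw [hT'T']; noncomm_ring
  · rw [star_mul, hT', mul_assoc, hTT, hmul]
    conv_rhs => rw [← cfc_id' ℝ T hT]
    refine cfc_congr fun x _ ↦ ?_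
    rcases eq_or_ne x 0 with rfl | hx
    · simp
    · field_simp

theorem re_trace_sqrt_conj_le {P Q : Matrix n n 𝕜} (hP : 0 ≤ P) (hQ : 0 ≤ Q) :
    re (CFC.sqrt (CFC.sqrt P * Q * CFC.sqrt P)).trace ≤ √(re P.trace * re Q.trace) := by
  set X := CFC.sqrt Q * CFC.sqrt P
  have hsa (A : Matrix n n 𝕜) : star (CFC.sqrt A) = CFC.sqrt A :=
    (CFC.sqrt_nonneg A).isSelfAdjoint.star_eq
  have hX : star X * X = CFC.sqrt P * Q * CFC.sqrt P := by
    rw [star_mul, hsa, hsa, mul_assoc, ← mul_assoc (CFC.sqrt Q), CFC.sqrt_mul_sqrt_self Q hQ,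
      mul_assoc]
  obtain ⟨W, hW, hWX⟩ := exists_isStarProjection_mul_star_and_star_mul_eq_sqrt X
  have hQW : re (CFC.sqrt Q * W * star (CFC.sqrt Q * W)).trace ≤ re Q.trace := by
    have := re_trace_mono (star_right_conjugate_le_conjugate hW.le_one (CFC.sqrt Q))
    rw [mul_one, hsa, CFC.sqrt_mul_sqrt_self Q hQ] at this
    simpa only [star_mul, hsa, mul_assoc] using this
  calc re (CFC.sqrt (CFC.sqrt P * Q * CFC.sqrt P)).trace
      = re (CFC.sqrt P * star (CFC.sqrt Q * W)).trace := by
        rw [← hX, ← hWX, star_mul, hsa, trace_mul_comm (CFC.sqrt P), mul_assoc]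
    _ ≤ √(re (CFC.sqrt Q * W * star (CFC.sqrt Q * W)).trace) *
          √(re (CFC.sqrt P * star (CFC.sqrt P)).trace) := re_trace_mul_star_le _ _
    _ ≤ √(re Q.trace) * √(re P.trace) := by
        rw [hsa, CFC.sqrt_mul_sqrt_self P hP]
        gcongr
    _ = √(re P.trace * re Q.trace) := by
        rw [mul_comm, Real.sqrt_mul (nonneg_iff.mp (nonneg_iff_posSemidef.mp hP).trace_nonneg).1]

theorem sq_re_trace_sqrt_conj_le {P Q : Matrix n n 𝕜} (hP : 0 ≤ P) (hQ : 0 ≤ Q) :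
    re (CFC.sqrt (CFC.sqrt P * Q * CFC.sqrt P)).trace ^ 2 ≤ re (P * Q).trace +
      √((re P.trace ^ 2 - re (P * P).trace) * (re Q.trace ^ 2 - re (Q * Q).trace)) := by
  set S := CFC.sqrt (CFC.sqrt P * Q * CFC.sqrt P)
  have hD : 0 ≤ CFC.sqrt P * Q * CFC.sqrt P := conjugate_nonneg_of_nonneg hQ (CFC.sqrt_nonneg P)
  have hSS : (S * S).trace = (P * Q).trace := by
    rw [CFC.sqrt_mul_sqrt_self _ hD, trace_mul_cycle, CFC.sqrt_mul_sqrt_self P hP]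
  have hS := re_trace_exteriorSquare (CFC.sqrt_nonneg (CFC.sqrt P * Q * CFC.sqrt P))
  have hES : exteriorSquare S = CFC.sqrt (CFC.sqrt (exteriorSquare P) * exteriorSquare Q *
      CFC.sqrt (exteriorSquare P)) := by
    rw [← sqrt_exteriorSquare hD, sqrt_exteriorSquare hP, exteriorSquare_mul, exteriorSquare_mul]
  have hbound := re_trace_sqrt_conj_le (exteriorSquare_nonneg hP) (exteriorSquare_nonneg hQ)
  rw [← hES, re_trace_exteriorSquare hP, re_trace_exteriorSquare hQ] at hbound
  have hhalf (a b : ℝ) : √(a / 2 * (b / 2)) = √(a * b) / 2 := by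
    rw [show a / 2 * (b / 2) = a * b / 2 ^ 2 by ring, Real.sqrt_div' _ (by positivity),
      Real.sqrt_sq zero_le_two]
  rw [hSS] at hS
  rw [hhalf] at hbound
  linarith

end RCLike

end Matrix

lemma fid_eq_sq_re_trace_sqrt {n : Type*} [Fintype n] [DecidableEq n] {ρ₁ ρ₂ : Matrix n n ℂ}
    (h1 : ρ₁.PosSemidef) (h2 : ρ₂.PosSemidef) :
    fid ρ₁ ρ₂ = (CFC.sqrt (CFC.sqrt ρ₁ * ρ₂ * CFC.sqrt ρ₁)).trace.re ^ 2 := by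
  have hD : (h1.sqrt * ρ₂ * h1.sqrt).PosSemidef := by
    rw [h1.sqrt_eq_cfcSqrt, ← nonneg_iff_posSemidef]
    exact conjugate_nonneg_of_nonneg h2.nonneg (CFC.sqrt_nonneg ρ₁)
  rw [fid, dif_pos h1, dif_pos hD, hD.sqrt_eq_cfcSqrt, h1.sqrt_eq_cfcSqrt]

theorem fidelity_le_superFidelity {N : ℕ} (ρ₁ ρ₂ : Matrix (Fin N) (Fin N) ℂ)
    (h1 : ρ₁.PosSemidef) (h2 : ρ₂.PosSemidef)
    (t1 : ρ₁.trace = 1) (t2 : ρ₂.trace = 1) :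
    fid ρ₁ ρ₂ ≤ ((ρ₁ * ρ₂).trace).re +
      Real.sqrt ((1 - ((ρ₁ * ρ₁).trace).re) * (1 - ((ρ₂ * ρ₂).trace).re)) := by
  rw [fid_eq_sq_re_trace_sqrt h1 h2]
  simpa [t1, t2] using Matrix.sq_re_trace_sqrt_conj_le h1.nonneg h2.nonneg
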